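/- For all m ≥ −1, K_{m+2} = K_m K_{m+1} with the last letter δ_m replaced by δ_{m+1}; equivalently, K_{m+2} equals K_m concatenated with K_{m+1} where the final letter of K_{m+1} (which is δ_m) is changed to δ_{m+1}. Symmetrically, K_{m+2} equals K_{m+1} K_m with the first letter of K_{m+1} (which is δ_m) changed to δ_{m+1}. -/

import Mathlib

/-!
By induction on `m`, the words `F_m F_{m-1}` and `F_{m-1} F_m` differ only by a swap of their
last two letters. Hence `F_m` ends in `δ_m` and, for `m ≥ 1`, its second-to-last letter is
`δ_{m-1}`; the identities for the singular words follow by writing both sides in terms of the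
common prefix of `F_m F_{m-1}` and `F_{m-1} F_m`.
-/

/-- Finite Fibonacci words, shifted: `FwS 0 = F₋₁ = b`, `FwS (m+1) = F_m`
(`F₀ = a`, `F₁ = ab`, `F_{m+1} = F_m F_{m-1}`), letters `a = false`, `b = true`. -/
def FwS : ℕ → List Bool
  | 0 => [true]
  | 1 => [false]
  | n + 2 => FwS (n + 1) ++ FwS n

/-- `del n` is the letter `δ_n` (the last letter of `F_n`): `a` iff `n` is even. -/
def del (n : ℕ) : Bool := if Even n then false else true

/-- `singK n = K_{n-1}`, the `(n-1)`-st singular word (so `n` ranges over `ℕ`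
as the paper's index ranges over `m ≥ -1`):
`K_m = δ_{m+1} · F_m[1, f_m − 1]`. -/
def singK (n : ℕ) : List Bool := del n :: (FwS n).dropLast

lemma del_add_two (n : ℕ) : del (n + 2) = del n := by
  simp [del, Nat.even_add_one]

lemma FwS_add_two (n : ℕ) : FwS (n + 2) = FwS (n + 1) ++ FwS n := rfl

lemma FwS_ne_nil : ∀ n, FwS n ≠ []
  | 0 | 1 => by simp [FwS]
  | n + 2 => by simp [FwS_add_two, FwS_ne_nil (n + 1)]

lemma exists_FwS_append_swap : ∀ n, ∃ P, FwS (n + 2) = P ++ [del n, del (n + 1)] ∧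
    FwS n ++ FwS (n + 1) = P ++ [del (n + 1), del n]
  | 0 => ⟨[], by decide, by decide⟩
  | n + 1 => by
    obtain ⟨P, hP, hP'⟩ := exists_FwS_append_swap n
    refine ⟨FwS (n + 1) ++ P, ?_, ?_⟩
    · rw [FwS_add_two, FwS_add_two, List.append_assoc, hP', del_add_two]
      simp
    · change FwS (n + 1) ++ FwS (n + 2) = _
      rw [hP, del_add_two]
      simp

lemma dropLast_FwS_add_two_eq (n : ℕ) {P : List Bool}
    (hP : FwS (n + 2) = P ++ [del n, del (n + 1)]) :
    (FwS (n + 2)).dropLast = P ++ [del n] := by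
  rw [hP, ← List.singleton_append, ← List.append_assoc, List.dropLast_concat]

lemma FwS_getLast? : ∀ n, (FwS n).getLast? = some (del (n + 1))
  | 0 | 1 => by decide
  | n + 2 => by
    obtain ⟨P, hP, -⟩ := exists_FwS_append_swap n
    simp [hP, del_add_two]

lemma dropLast_FwS_append (n : ℕ) : (FwS n).dropLast ++ [del (n + 1)] = FwS n :=
  List.dropLast_append_getLast? _ (FwS_getLast? n)

lemma singK_getLast? (n : ℕ) : (singK (n + 1)).getLast? = some (del (n + 1)) := by
  cases n with
  | zero => decide
  | succ n =>
    obtain ⟨P, hP, -⟩ := exists_FwS_append_swap n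
    rw [singK, dropLast_FwS_add_two_eq n hP, ← List.cons_append, List.getLast?_concat,
      del_add_two]

lemma singK_add_two (n : ℕ) : singK (n + 2) = del n :: (FwS (n + 1) ++ (FwS n).dropLast) := by
  rw [singK, del_add_two, FwS_add_two, List.dropLast_append_of_ne_nil (FwS_ne_nil n)]

lemma singK_add_two_eq_append (n : ℕ) :
    singK (n + 2) = singK n ++ ((singK (n + 1)).dropLast ++ [del n]) := by
  obtain ⟨P, hP, hP'⟩ := exists_FwS_append_swap n
  -- `singK n ++ singK (n + 1)` is `del n :: P ++ [del (n + 1)]`, while `singK (n + 2)` is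
  -- `del n :: P ++ [del n]`.
  have hKK : (FwS n).dropLast ++ singK (n + 1) = P ++ [del (n + 1)] := by
    rw [← dropLast_FwS_append n, ← dropLast_FwS_append (n + 1), del_add_two] at hP'
    rw [singK, ← List.append_left_inj [del n]]
    simpa using hP'
  rw [singK, dropLast_FwS_add_two_eq n hP, del_add_two, singK, ← List.dropLast_concat (l₁ := P),
    ← hKK, singK, List.dropLast_append_cons]
  simp

lemma singK_add_two_eq_cons (n : ℕ) :
    singK (n + 2) = del n :: ((singK (n + 1)).tail ++ singK n) := by
  rw [singK_add_two, ← dropLast_FwS_append (n + 1), del_add_two, singK, singK]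
  simp

/-- For all `m ≥ -1` (here `n = m + 1`):
`K_{m+2}` is `K_m K_{m+1}` with the last letter of `K_{m+1}` (which is `δ_m`)
changed to `δ_{m+1}`, and symmetrically `K_{m+2}` is `K_{m+1} K_m` with the
first letter of `K_{m+1}` (which is `δ_m`) changed to `δ_{m+1}`. -/
theorem stmt_7 (n : ℕ) :
    (singK (n + 1)).getLast? = some (del (n + 1)) ∧
    (singK (n + 1)).head? = some (del (n + 1)) ∧
    singK (n + 2) = singK n ++ ((singK (n + 1)).dropLast ++ [del n]) ∧
    singK (n + 2) = del n :: ((singK (n + 1)).tail ++ singK n) :=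
  ⟨singK_getLast? n, rfl, singK_add_two_eq_append n, singK_add_two_eq_cons n⟩
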